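/- Let k̂₂ : [0,1] × [0,1] → ℝ be defined by k̂₂(t,s) = (1/2)·(2t−t²−s)s if s ≤ t and k̂₂(t,s) = (1/2)·(1−s)t² if s ≥ t. Then for every continuous function y : [0,1] → ℝ, the function u(t) = ∫₀¹ k̂₂(t,s) y(s) ds is three times continuously differentiable on [0,1], satisfies u‴(t) = −y(t) for all t ∈ [0,1], and satisfies the boundary conditions u(0) = u′(0) = u′(1) = 0. -/

import Mathlib

open Set

/-- The Green's function `k̂₂` for `-u''' = y`, `u(0) = u'(0) = u'(1) = 0`. -/
noncomputable def khat2 : ℝ → ℝ → ℝ := fun t s =>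
  if s ≤ t then (1 / 2) * ((2 * t - t ^ 2 - s) * s)
  else (1 / 2) * ((1 - s) * t ^ 2)


noncomputable def Gg (g : ℝ → ℝ) (i : ℕ) (t : ℝ) : ℝ := ∫ s in (0:ℝ)..t, s ^ i * g s

noncomputable def Fg (g : ℝ → ℝ) (A t : ℝ) : ℝ :=
  t * Gg g 1 t - (1/2) * Gg g 2 t + (t^2/2) * (A - Gg g 0 t)

noncomputable def F1g (g : ℝ → ℝ) (A t : ℝ) : ℝ := Gg g 1 t + t * (A - Gg g 0 t)

noncomputable def F2g (g : ℝ → ℝ) (A t : ℝ) : ℝ := A - Gg g 0 t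

lemma hasDerivAt_Gg {g : ℝ → ℝ} (hg : Continuous g) (i : ℕ) (t : ℝ) :
    HasDerivAt (Gg g i) (t ^ i * g t) t :=
  ((continuous_pow i).mul hg).integral_hasStrictDerivAt 0 t |>.hasDerivAt

lemma hasDerivAt_Fg {g : ℝ → ℝ} (hg : Continuous g) (A t : ℝ) :
    HasDerivAt (Fg g A) (F1g g A t) t := by
  have h0 := hasDerivAt_Gg hg 0 t
  have h1 := hasDerivAt_Gg hg 1 t
  have h2 := hasDerivAt_Gg hg 2 t
  have := (((hasDerivAt_id t).mul h1).sub ((hasDerivAt_const t (1/2:ℝ)).mul h2)).add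
    ((((hasDerivAt_pow 2 t).div_const 2)).mul ((hasDerivAt_const t A).sub h0))
  refine this.congr_deriv ?_
  simp [F1g]
  ring

lemma hasDerivAt_F1g {g : ℝ → ℝ} (hg : Continuous g) (A t : ℝ) :
    HasDerivAt (F1g g A) (F2g g A t) t := by
  have h0 := hasDerivAt_Gg hg 0 t
  have h1 := hasDerivAt_Gg hg 1 t
  have := h1.add ((hasDerivAt_id t).mul ((hasDerivAt_const t A).sub h0))
  refine this.congr_deriv ?_
  simp [F2g]

lemma hasDerivAt_F2g {g : ℝ → ℝ} (hg : Continuous g) (A t : ℝ) :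
    HasDerivAt (F2g g A) (-g t) t := by
  have h0 := hasDerivAt_Gg hg 0 t
  have := (hasDerivAt_const t A).sub h0
  refine this.congr_deriv ?_
  simp

lemma khat2_cont (t : ℝ) : Continuous (fun s => khat2 t s) := by
  unfold khat2
  apply Continuous.if_le (by continuity) (by continuity) continuous_id continuous_const
  intro s hs
  simp only [id_eq] at hs
  subst hs; ring

lemma key {g : ℝ → ℝ} (hg : Continuous g) {t : ℝ} (ht : t ∈ Icc (0:ℝ) 1) :
    (∫ s in (0:ℝ)..1, khat2 t s * g s) = Fg g (∫ s in (0:ℝ)..1, (1 - s) * g s) t := by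
  obtain ⟨ht0, ht1⟩ := ht
  have hk : Continuous (fun s => khat2 t s * g s) := (khat2_cont t).mul hg
  have hint : ∀ a b : ℝ, ∀ h : ℝ → ℝ, Continuous h → IntervalIntegrable h MeasureTheory.volume a b :=
    fun a b h hh => hh.intervalIntegrable a b
  have hsplit : (∫ s in (0:ℝ)..t, khat2 t s * g s) + (∫ s in t..1, khat2 t s * g s)
      = ∫ s in (0:ℝ)..1, khat2 t s * g s :=
    intervalIntegral.integral_add_adjacent_intervals (hint 0 t _ hk) (hint t 1 _ hk)
  have hleft : (∫ s in (0:ℝ)..t, khat2 t s * g s)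
      = (t - t^2/2) * Gg g 1 t - (1/2) * Gg g 2 t := by
    have h1 : (∫ s in (0:ℝ)..t, khat2 t s * g s)
        = ∫ s in (0:ℝ)..t, ((t - t^2/2) * (s^1 * g s) - (1/2) * (s^2 * g s)) := by
      apply intervalIntegral.integral_congr
      intro s hs
      rw [uIcc_of_le ht0] at hs
      simp only [khat2, if_pos hs.2]
      ring
    rw [h1, intervalIntegral.integral_sub, intervalIntegral.integral_const_mul,
      intervalIntegral.integral_const_mul]
    · rfl
    · exact (continuous_const.mul ((continuous_pow 1).mul hg)).intervalIntegrable _ _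
    · exact (continuous_const.mul ((continuous_pow 2).mul hg)).intervalIntegrable _ _
  have hA : ∀ a b : ℝ, (∫ s in a..b, (1 - s) * g s) = (∫ s in a..b, s^0 * g s) - ∫ s in a..b, s^1 * g s := by
    intro a b
    rw [← intervalIntegral.integral_sub ((by continuity : Continuous fun s : ℝ => s^0 * g s).intervalIntegrable _ _)
      ((by continuity : Continuous fun s : ℝ => s^1 * g s).intervalIntegrable _ _)]
    apply intervalIntegral.integral_congr
    intro s _; ring
  have hright : (∫ s in t..1, khat2 t s * g s)
      = (t^2/2) * ((∫ s in (0:ℝ)..1, (1 - s) * g s) - (Gg g 0 t - Gg g 1 t)) := by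
    have h1 : (∫ s in t..1, khat2 t s * g s) = ∫ s in t..1, (t^2/2) * ((1 - s) * g s) := by
      apply intervalIntegral.integral_congr
      intro s hs
      rw [uIcc_of_le ht1] at hs
      simp only [khat2]
      rcases le_or_gt s t with h | h
      · have : s = t := le_antisymm h hs.1
        subst this; rw [if_pos le_rfl]; ring
      · rw [if_neg (not_le.mpr h)]; ring
    have h2 : (∫ s in t..1, (1 - s) * g s)
        = (∫ s in (0:ℝ)..1, (1 - s) * g s) - ∫ s in (0:ℝ)..t, (1 - s) * g s := by
      have hc : Continuous fun s : ℝ => (1 - s) * g s := by continuity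
      have := intervalIntegral.integral_add_adjacent_intervals
        (hc.intervalIntegrable (μ := MeasureTheory.volume) 0 t)
        (hc.intervalIntegrable (μ := MeasureTheory.volume) t 1)
      linarith
    rw [h1, intervalIntegral.integral_const_mul, h2, hA 0 t]
    rfl
  have hG0 : Gg g 0 t = ∫ s in (0:ℝ)..t, s^0 * g s := rfl
  rw [← hsplit, hleft, hright, Fg]
  ring

lemma contDiff_Fg {g : ℝ → ℝ} (hg : Continuous g) (A : ℝ) : ContDiff ℝ 3 (Fg g A) := by
  have hd1 : deriv (Fg g A) = F1g g A := funext fun t => (hasDerivAt_Fg hg A t).deriv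
  have hd2 : deriv (F1g g A) = F2g g A := funext fun t => (hasDerivAt_F1g hg A t).deriv
  have hd3 : deriv (F2g g A) = fun t => -g t := funext fun t => (hasDerivAt_F2g hg A t).deriv
  have h2 : ContDiff ℝ 1 (F2g g A) := by
    rw [contDiff_one_iff_deriv]
    exact ⟨fun t => (hasDerivAt_F2g hg A t).differentiableAt, hd3 ▸ hg.neg⟩
  have h1 : ContDiff ℝ (1 + 1) (F1g g A) :=
    contDiff_succ_iff_deriv.mpr ⟨fun t => (hasDerivAt_F1g hg A t).differentiableAt,
      by simp, hd2 ▸ h2⟩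
  have h1' : ContDiff ℝ 2 (F1g g A) := by norm_num at h1; exact h1
  have h0 : ContDiff ℝ (2 + 1) (Fg g A) :=
    contDiff_succ_iff_deriv.mpr ⟨fun t => (hasDerivAt_Fg hg A t).differentiableAt,
      by simp, hd1 ▸ h1'⟩
  norm_num at h0; exact h0


/-- For every continuous `y : [0,1] → ℝ`, the function
`u(t) = ∫₀¹ k̂₂(t,s) y(s) ds` is three times continuously differentiable on
`[0,1]`, satisfies `u'''(t) = -y(t)` on `[0,1]` (derivatives taken within
`[0,1]`), and satisfies `u(0) = u'(0) = u'(1) = 0`. -/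
theorem stmt_4 (y : ℝ → ℝ) (hy : ContinuousOn y (Icc 0 1)) :
    ContDiffOn ℝ 3 (fun t => ∫ s in (0:ℝ)..1, khat2 t s * y s) (Icc 0 1) ∧
    (∀ t ∈ Icc (0:ℝ) 1,
      derivWithin (derivWithin (derivWithin
        (fun t => ∫ s in (0:ℝ)..1, khat2 t s * y s) (Icc 0 1)) (Icc 0 1)) (Icc 0 1) t
        = - y t) ∧
    (∫ s in (0:ℝ)..1, khat2 0 s * y s) = 0 ∧
    derivWithin (fun t => ∫ s in (0:ℝ)..1, khat2 t s * y s) (Icc 0 1) 0 = 0 ∧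
    derivWithin (fun t => ∫ s in (0:ℝ)..1, khat2 t s * y s) (Icc 0 1) 1 = 0 := by
  obtain ⟨g, hg, hgy⟩ : ∃ g : ℝ → ℝ, Continuous g ∧ ∀ t ∈ Icc (0:ℝ) 1, g t = y t := by
    refine ⟨fun t => y (max 0 (min 1 t)),
      hy.comp_continuous (continuous_const.max (continuous_const.min continuous_id))
        (fun x => ⟨le_max_left _ _, max_le (by norm_num) (min_le_left _ _)⟩), ?_⟩
    intro t ht
    show y (max 0 (min 1 t)) = y t
    rw [min_eq_right ht.2, max_eq_right ht.1]
  set A : ℝ := ∫ s in (0:ℝ)..1, (1 - s) * g s with hAdef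
  set u : ℝ → ℝ := fun t => ∫ s in (0:ℝ)..1, khat2 t s * y s with hudef
  have hu : ∀ t ∈ Icc (0:ℝ) 1, u t = Fg g A t := by
    intro t ht
    rw [show u t = ∫ s in (0:ℝ)..1, khat2 t s * g s by
      apply intervalIntegral.integral_congr
      intro s hs
      rw [uIcc_of_le (by norm_num : (0:ℝ) ≤ 1)] at hs
      show khat2 t s * y s = khat2 t s * g s
      rw [hgy s hs]]
    exact key hg ht
  have hud : UniqueDiffOn ℝ (Icc (0:ℝ) 1) := uniqueDiffOn_Icc (by norm_num)
  have hu1 : ∀ t ∈ Icc (0:ℝ) 1, derivWithin u (Icc 0 1) t = F1g g A t := by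
    intro t ht
    rw [derivWithin_congr hu (hu t ht)]
    exact ((hasDerivAt_Fg hg A t).hasDerivWithinAt).derivWithin (hud t ht)
  have hu2 : ∀ t ∈ Icc (0:ℝ) 1,
      derivWithin (derivWithin u (Icc 0 1)) (Icc 0 1) t = F2g g A t := by
    intro t ht
    rw [derivWithin_congr hu1 (hu1 t ht)]
    exact ((hasDerivAt_F1g hg A t).hasDerivWithinAt).derivWithin (hud t ht)
  refine ⟨?_, ?_, ?_, ?_, ?_⟩
  · exact ((contDiff_Fg hg A).contDiffOn).congr hu
  · intro t ht
    rw [derivWithin_congr hu2 (hu2 t ht),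
      ((hasDerivAt_F2g hg A t).hasDerivWithinAt).derivWithin (hud t ht), hgy t ht]
  · have := hu 0 ⟨le_rfl, by norm_num⟩
    simp only [hudef] at this
    rw [this]
    simp [Fg, Gg]
  · rw [hu1 0 ⟨le_rfl, by norm_num⟩]
    simp [F1g, Gg]
  · rw [hu1 1 ⟨by norm_num, le_rfl⟩]
    have hc0 : Continuous fun s : ℝ => s ^ 0 * g s := by continuity
    have hc1 : Continuous fun s : ℝ => s ^ 1 * g s := by continuity
    have hc2 : Continuous fun s : ℝ => (1 - s) * g s := by continuity
    have : A - Gg g 0 1 + Gg g 1 1 = ∫ s in (0:ℝ)..1, ((1 - s) * g s - s ^ 0 * g s + s ^ 1 * g s) := by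
      rw [intervalIntegral.integral_add (f := fun s => (1 - s) * g s - s ^ 0 * g s) ((hc2.sub hc0).intervalIntegrable _ _) (hc1.intervalIntegrable _ _),
        intervalIntegral.integral_sub (hc2.intervalIntegrable _ _) (hc0.intervalIntegrable _ _)]
      rw [hAdef]
      rfl
    have h0 : (∫ s in (0:ℝ)..1, ((1 - s) * g s - s ^ 0 * g s + s ^ 1 * g s)) = 0 := by
      rw [show (fun s : ℝ => (1 - s) * g s - s ^ 0 * g s + s ^ 1 * g s) = fun s : ℝ => 0 by
        funext s; ring]
      simp
    simp only [F1g]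
    linarith [this, h0]
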